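/- arXiv:1101.4420 — 2 statements merged into one kernel-verified Lean document; each statement's English description precedes it below -/
import Mathlib

section
/- There do not exist three unit circles C₁, C₂, C₃ in the plane with distinct centers c₁, c₂, c₃ such that each pair Cᵢ, Cⱼ intersects in two distinct points xᵢⱼ and yᵢⱼ, and for every i, the angular distance (as seen from the center cᵢ) between any intersection point of Cᵢ with Cⱼ and any intersection point of Cᵢ with Cₖ (j ≠ i ≠ k, j ≠ k) is less than π/3. -/
open EuclideanGeometry Metric Real

/-! Two circles of equal radius with centres `a ≠ b` meeting at `x ≠ y` form a rhombus `a x b y`,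
so `b - a = (x - a) + (y - a)`. At a centre `a`, if the two radii towards one pair of
intersection points make angles below `π/3` with the two radii towards another pair, each of the
four inner products exceeds half the product of the norms, and summing shows that the angle at `a`
between the two other centres is below `π/3` as well. The three angles of the triangle of centres
would then add up to less than `π`. -/

section
variable {V : Type*} [NormedAddCommGroup V] [InnerProductSpace ℝ V]

theorem InnerProductGeometry.angle_lt_pi_div_three_iff {x y : V} :
    InnerProductGeometry.angle x y < π / 3 ↔ 1 / 2 < cos (InnerProductGeometry.angle x y) := by
  have hπ : π / 3 ∈ Set.Icc 0 π := ⟨by linarith [pi_pos], by linarith [pi_pos]⟩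
  rw [← cos_pi_div_three]
  exact (strictAntiOn_cos.lt_iff_gt hπ ⟨angle_nonneg x y, angle_le_pi x y⟩).symm

theorem InnerProductGeometry.norm_mul_norm_lt_two_mul_inner_of_angle_lt_pi_div_three {x y : V}
    (h : InnerProductGeometry.angle x y < π / 3) : ‖x‖ * ‖y‖ < 2 * inner ℝ x y := by
  have hx : x ≠ 0 := by
    rintro rfl; rw [angle_zero_left] at h; linarith [pi_pos]
  have hy : y ≠ 0 := by
    rintro rfl; rw [angle_zero_right] at h; linarith [pi_pos]
  have hcos := angle_lt_pi_div_three_iff.mp h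
  have hxy : 0 < ‖x‖ * ‖y‖ := by positivity
  rw [← cos_angle_mul_norm_mul_norm]
  nlinarith

theorem InnerProductGeometry.angle_add_add_lt_pi_div_three {u v w z : V}
    (huw : InnerProductGeometry.angle u w < π / 3) (huz : InnerProductGeometry.angle u z < π / 3)
    (hvw : InnerProductGeometry.angle v w < π / 3) (hvz : InnerProductGeometry.angle v z < π / 3) :
    InnerProductGeometry.angle (u + v) (w + z) < π / 3 := by
  have h_inner : (‖u‖ + ‖v‖) * (‖w‖ + ‖z‖) < 2 * inner ℝ (u + v) (w + z) := by
    simp only [inner_add_left, inner_add_right]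
    linarith [norm_mul_norm_lt_two_mul_inner_of_angle_lt_pi_div_three huw,
      norm_mul_norm_lt_two_mul_inner_of_angle_lt_pi_div_three huz,
      norm_mul_norm_lt_two_mul_inner_of_angle_lt_pi_div_three hvw,
      norm_mul_norm_lt_two_mul_inner_of_angle_lt_pi_div_three hvz]
  have h_norm : ‖u + v‖ * ‖w + z‖ ≤ (‖u‖ + ‖v‖) * (‖w‖ + ‖z‖) := by
    gcongr <;> exact norm_add_le _ _
  have h_pos : 0 < ‖u + v‖ * ‖w + z‖ := by
    have := real_inner_le_norm (u + v) (w + z)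
    nlinarith [norm_nonneg u, norm_nonneg v, norm_nonneg w, norm_nonneg z]
  rw [angle_lt_pi_div_three_iff, cos_angle, lt_div_iff₀ h_pos]
  linarith

theorem add_eq_add_of_dist_eq_of_finrank_eq_two [FiniteDimensional ℝ V]
    (hd : Module.finrank ℝ V = 2) {a b x y : V} {r : ℝ} (hab : a ≠ b) (hxy : x ≠ y)
    (hxa : dist x a = r) (hxb : dist x b = r) (hya : dist y a = r) (hyb : dist y b = r) :
    x + y = a + b := by
  -- the point reflection `p ↦ a + b - p` swaps `a` and `b`, so it preserves both circles
  have hreflect : ∀ p, dist p a = r → dist p b = r → a + b - p = x ∨ a + b - p = y := by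
    intro p hpa hpb
    refine eq_of_dist_eq_of_dist_eq_of_finrank_eq_two hd hab hxy hxa hya ?_ hxb hyb ?_
    · rw [dist_eq_norm, show a + b - p - a = -(p - b) by abel, norm_neg, ← dist_eq_norm, hpb]
    · rw [dist_eq_norm, show a + b - p - b = -(p - a) by abel, norm_neg, ← dist_eq_norm, hpa]
  rcases hreflect x hxa hxb with hx | hx
  swap; · rw [← hx]; abel
  rcases hreflect y hya hyb with hy | hy
  · rw [← hy]; abel
  have h2 : (2 : ℝ) • x = (2 : ℝ) • y := by linear_combination (norm := module) hy - hx
  exact absurd (smul_right_injective V two_ne_zero h2) hxy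

theorem angle_lt_pi_div_three_of_forall_angle_inter_lt [FiniteDimensional ℝ V]
    (hd : Module.finrank ℝ V = 2) {a b c x y x' y' : V} {r : ℝ} (hb : a ≠ b) (hc : a ≠ c)
    (hxy : x ≠ y) (hxy' : x' ≠ y') (hab : sphere a r ∩ sphere b r = {x, y})
    (hac : sphere a r ∩ sphere c r = {x', y'})
    (hangle : ∀ p ∈ ({x, y} : Set V), ∀ q ∈ ({x', y'} : Set V), ∠ p a q < π / 3) :
    ∠ b a c < π / 3 := by
  have hrhombus : ∀ {d p q : V}, a ≠ d → p ≠ q → sphere a r ∩ sphere d r = {p, q} →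
      (p - a) + (q - a) = d - a := by
    intro d p q hd' hpq h
    obtain ⟨⟨hpa, hpd⟩, hqa, hqd⟩ :
        (p ∈ sphere a r ∩ sphere d r) ∧ q ∈ sphere a r ∩ sphere d r := by
      rw [h]; simp
    rw [Metric.mem_sphere] at hpa hpd hqa hqd
    linear_combination (norm := module)
      add_eq_add_of_dist_eq_of_finrank_eq_two hd hd' hpq hpa hpd hqa hqd
  rw [EuclideanGeometry.angle, vsub_eq_sub, vsub_eq_sub, ← hrhombus hb hxy hab,
    ← hrhombus hc hxy' hac]
  exact InnerProductGeometry.angle_add_add_lt_pi_div_three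
    (hangle x (by simp) x' (by simp)) (hangle x (by simp) y' (by simp))
    (hangle y (by simp) x' (by simp)) (hangle y (by simp) y' (by simp))

end

/-- There are no three unit circles with distinct centers, pairwise intersecting in two
distinct points, such that for each `i` the angle at `cᵢ` between any intersection point of
`Cᵢ` with `Cⱼ` and any intersection point of `Cᵢ` with `Cₖ` is less than `π/3`. -/
theorem no_three_close_unit_circles :
    ¬ ∃ (c : Fin 3 → ℂ) (x y : Fin 3 → Fin 3 → ℂ),
      Function.Injective c ∧
      (∀ i j : Fin 3, i ≠ j →
        x i j ≠ y i j ∧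
        sphere (c i) 1 ∩ sphere (c j) 1 = {x i j, y i j}) ∧
      (∀ i j k : Fin 3, j ≠ i → k ≠ i → j ≠ k →
        ∀ p q : ℂ, (p = x i j ∨ p = y i j) → (q = x i k ∨ q = y i k) →
          EuclideanGeometry.angle p (c i) q < π / 3) := by
  rintro ⟨c, x, y, hc, hinter, hangle⟩
  have hvertex : ∀ i j k : Fin 3, j ≠ i → k ≠ i → j ≠ k → ∠ (c j) (c i) (c k) < π / 3 :=
    fun i j k hji hki hjk =>
      angle_lt_pi_div_three_of_forall_angle_inter_lt Complex.finrank_real_complex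
        (hc.ne hji.symm) (hc.ne hki.symm) (hinter i j hji.symm).1 (hinter i k hki.symm).1
        (hinter i j hji.symm).2 (hinter i k hki.symm).2
        (fun p hp q hq => hangle i j k hji hki hjk p q hp hq)
  have htriangle := angle_add_angle_add_angle_eq_pi (c 2) (hc.ne (by decide : (1 : Fin 3) ≠ 0))
  linarith [hvertex 1 0 2 (by decide) (by decide) (by decide),
    hvertex 2 1 0 (by decide) (by decide) (by decide),
    hvertex 0 2 1 (by decide) (by decide) (by decide)]
end

section
/- In the achievement game played on any hypergraph H, the second player does not have a strategy guaranteeing a strong win. (Strategy stealing: if the second player had a strong-win strategy σ, the first player could steal it by making an arbitrary 'ghost' move and thereafter following σ while ignoring the ghost move, yielding a first-player strong win — a contradiction, since both players cannot simultaneously be guaranteed to complete an edge strictly first.) -/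
/-- The set of vertices occupied by Player 1 (who moves at even indices) after move `n`
of the play `p`. -/
def playerOneMoves {V : Type*} (p : ℕ → V) (n : ℕ) : Set V :=
  p '' {k | k ≤ n ∧ Even k}

/-- The set of vertices occupied by Player 2 (who moves at odd indices) after move `n`
of the play `p`. -/
def playerTwoMoves {V : Type*} (p : ℕ → V) (n : ℕ) : Set V :=
  p '' {k | k ≤ n ∧ Odd k}

/-- Player 2 strongly wins the play `p` of the achievement game on the hypergraph with
edge set `E`: at some move `n` Player 2 occupies all of some edge, while Player 1 has not
occupied any edge at any move `m ≤ n`. -/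
def StrongWinTwo {V : Type*} (E : Set (Set V)) (p : ℕ → V) : Prop :=
  ∃ n : ℕ, (∃ e ∈ E, e ⊆ playerTwoMoves p n) ∧
    ∀ m ≤ n, ¬ ∃ e ∈ E, e ⊆ playerOneMoves p m

/-- The play `p` is consistent with the strategy `σ` for Player 2: each odd-indexed move
is given by applying `σ` to the history of previous moves. -/
def ConsistentWithTwo {V : Type*} (σ : List V → V) (p : ℕ → V) : Prop :=
  ∀ k : ℕ, Odd k → p k = σ (List.ofFn fun i : Fin k => p i)

/-!
Strategy stealing. Player 1 opens with an arbitrary vertex and then answers as `σ` would in an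
imagined play in which the roles are swapped and that opening is ignored; when `σ` asks for a
vertex Player 1 already owns, it plays any unchosen vertex instead. Both plays follow `σ`, so `σ`
would have to win both. But Player 2's vertices in the real play are Player 1's vertices in the
imagined one, and Player 2's vertices in the imagined play are, one move later, Player 1's
vertices in the real one; so whichever play Player 2 completes an edge in first, Player 1 of the
other play has completed an edge no later.
-/

theorem Function.injective_of_forall_notMem_ofFn {α : Type*} {f : ℕ → α}
    (h : ∀ n, (List.ofFn fun i : Fin n => f i).Nodup → f n ∉ List.ofFn fun i : Fin n => f i) :
    Function.Injective f := by
  have hnodup : ∀ n, (List.ofFn fun i : Fin n => f i).Nodup := by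
    intro n
    induction n with
    | zero => simp
    | succ n ih =>
      rw [List.ofFn_succ', List.nodup_concat]
      exact ⟨h n ih, ih⟩
  intro a b hab
  by_contra hne
  rcases lt_or_gt_of_ne hne with hlt | hlt
  · exact h b (hnodup b) (List.mem_ofFn.mpr ⟨⟨a, hlt⟩, hab⟩)
  · exact h a (hnodup a) (List.mem_ofFn.mpr ⟨⟨b, hlt⟩, hab.symm⟩)

theorem not_strongWinTwo_and_strongWinTwo {V : Type*} {E : Set (Set V)} {p q : ℕ → V}
    (hpq : ∀ n, playerTwoMoves p n ⊆ playerOneMoves q n)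
    (hqp : ∀ n, playerTwoMoves q n ⊆ playerOneMoves p (n + 1)) :
    ¬ (StrongWinTwo E p ∧ StrongWinTwo E q) := by
  rintro ⟨⟨n, ⟨e, he, hep⟩, hp⟩, ⟨m, ⟨f, hf, hfq⟩, hq⟩⟩
  rcases le_or_gt n m with hnm | hmn
  · exact hq n hnm ⟨e, he, hep.trans (hpq n)⟩
  · exact hp (m + 1) hmn ⟨f, hf, hfq.trans (hqp m)⟩

namespace StrategyStealing

variable {V : Type*} (σ : List V → V)

open Classical in
/-- `stolenMoves σ n = (realPlay σ (n + 1), ghostPlay σ n)`; the two plays are built together. -/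
noncomputable def stolenMoves (n : ℕ) : V × V :=
  let realHistory := σ [] :: List.ofFn fun i : Fin n => (stolenMoves i).1
  let ghostMove :=
    if Even n then σ realHistory else σ (List.ofFn fun i : Fin n => (stolenMoves i).2)
  (if Odd n ∧ ghostMove ∉ realHistory then ghostMove else σ realHistory, ghostMove)

/-- The real play: Player 2 follows `σ`; Player 1 takes `σ`'s move in `ghostPlay` when it is
still free, and otherwise `σ` of the current history, which a legal `σ` makes a free vertex. -/
noncomputable def realPlay : ℕ → V
  | 0 => σ []
  | n + 1 => (stolenMoves σ n).1

/-- The imagined play: its Player 1 copies the real Player 2, its Player 2 follows `σ`. -/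
noncomputable def ghostPlay (n : ℕ) : V := (stolenMoves σ n).2

theorem ghostPlay_eq (n : ℕ) :
    ghostPlay σ n = if Even n then σ (List.ofFn fun i : Fin (n + 1) => realPlay σ i)
      else σ (List.ofFn fun i : Fin n => ghostPlay σ i) := by
  rw [ghostPlay, stolenMoves, List.ofFn_succ]
  rfl

open Classical in
theorem realPlay_succ (n : ℕ) :
    realPlay σ (n + 1) =
      if Odd n ∧ ghostPlay σ n ∉ List.ofFn fun i : Fin (n + 1) => realPlay σ i then ghostPlay σ n
      else σ (List.ofFn fun i : Fin (n + 1) => realPlay σ i) := by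
  rw [realPlay, stolenMoves, ghostPlay, stolenMoves, List.ofFn_succ]
  rfl

theorem realPlay_succ_of_even {n : ℕ} (hn : Even n) :
    realPlay σ (n + 1) = σ (List.ofFn fun i : Fin (n + 1) => realPlay σ i) := by
  rw [realPlay_succ, if_neg (fun h => Nat.not_odd_iff_even.mpr hn h.1)]

theorem ghostPlay_of_even {n : ℕ} (hn : Even n) : ghostPlay σ n = realPlay σ (n + 1) := by
  rw [ghostPlay_eq, if_pos hn, realPlay_succ_of_even σ hn]

theorem realPlay_consistent : ConsistentWithTwo σ (realPlay σ) := by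
  rintro _ ⟨t, rfl⟩
  exact realPlay_succ_of_even σ (even_two_mul t)

theorem ghostPlay_consistent : ConsistentWithTwo σ (ghostPlay σ) := by
  intro n hn
  rw [ghostPlay_eq, if_neg (Nat.not_even_iff_odd.mpr hn)]

theorem realPlay_succ_eq_or_mem_of_odd {n : ℕ} (hn : Odd n) :
    realPlay σ (n + 1) = ghostPlay σ n ∨ ∃ j ≤ n, realPlay σ j = ghostPlay σ n := by
  by_cases htaken : ghostPlay σ n ∈ List.ofFn fun i : Fin (n + 1) => realPlay σ i
  · obtain ⟨j, hj⟩ := List.mem_ofFn.mp htaken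
    exact Or.inr ⟨j, Nat.le_of_lt_succ j.2, hj⟩
  · rw [realPlay_succ, if_pos ⟨hn, htaken⟩]
    exact Or.inl rfl

theorem exists_realPlay_eq_ghostPlay (n : ℕ) : ∃ j ≤ n + 1, realPlay σ j = ghostPlay σ n := by
  rcases Nat.even_or_odd n with hn | hn
  · exact ⟨n + 1, le_rfl, (ghostPlay_of_even σ hn).symm⟩
  · rcases realPlay_succ_eq_or_mem_of_odd σ hn with h | ⟨j, hj, h⟩
    · exact ⟨n + 1, le_rfl, h⟩
    · exact ⟨j, by omega, h⟩

theorem playerTwoMoves_realPlay_subset (n : ℕ) :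
    playerTwoMoves (realPlay σ) n ⊆ playerOneMoves (ghostPlay σ) n := by
  rintro _ ⟨_, ⟨hk, t, rfl⟩, rfl⟩
  exact ⟨2 * t, ⟨by omega, even_two_mul t⟩, ghostPlay_of_even σ (even_two_mul t)⟩

variable {σ} (hσ : ∀ h : List V, h.Nodup → σ h ∉ h)
include hσ

theorem realPlay_injective : Function.Injective (realPlay σ) := by
  refine Function.injective_of_forall_notMem_ofFn fun n hnodup => ?_
  cases n with
  | zero => simp
  | succ n =>
    rw [realPlay_succ]
    split_ifs with hfree
    exacts [hfree.2, hσ _ hnodup]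

theorem ghostPlay_injective : Function.Injective (ghostPlay σ) := by
  refine Function.injective_of_forall_notMem_ofFn fun n hnodup hmem => ?_
  rcases Nat.even_or_odd n with hn | hn
  · obtain ⟨i, hi⟩ := List.mem_ofFn.mp hmem
    obtain ⟨j, hj, hji⟩ := exists_realPlay_eq_ghostPlay σ i
    rw [hi, ghostPlay_of_even σ hn] at hji
    have := realPlay_injective hσ hji
    omega
  · rw [ghostPlay_consistent σ n hn] at hmem
    exact hσ _ hnodup hmem

theorem ghostPlay_mem_playerOneMoves {n : ℕ} (hn : Odd n) :
    ghostPlay σ n ∈ playerOneMoves (realPlay σ) (n + 1) := by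
  rcases realPlay_succ_eq_or_mem_of_odd σ hn with h | ⟨j, hj, h⟩
  · exact ⟨n + 1, ⟨le_rfl, hn.add_one⟩, h⟩
  · rcases Nat.even_or_odd j with hj' | ⟨t, rfl⟩
    · exact ⟨j, ⟨by omega, hj'⟩, h⟩
    -- an odd-indexed real vertex is taken by the imagined Player 1, hence not by `σ` there
    · rw [← ghostPlay_of_even σ (even_two_mul t)] at h
      have := ghostPlay_injective hσ h
      subst this
      exact absurd hn (Nat.not_odd_iff_even.mpr (even_two_mul t))

theorem playerTwoMoves_ghostPlay_subset (n : ℕ) :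
    playerTwoMoves (ghostPlay σ) n ⊆ playerOneMoves (realPlay σ) (n + 1) := by
  rintro _ ⟨k, ⟨hk, hodd⟩, rfl⟩
  obtain ⟨j, ⟨hj, hje⟩, h⟩ := ghostPlay_mem_playerOneMoves hσ hodd
  exact ⟨j, ⟨by omega, hje⟩, h⟩

end StrategyStealing

open StrategyStealing in
theorem no_second_player_strong_win_strategy_general (V : Type*) (E : Set (Set V)) :
    ¬ ∃ σ : List V → V, (∀ h : List V, h.Nodup → σ h ∉ h) ∧
      ∀ p : ℕ → V, Function.Injective p → ConsistentWithTwo σ p → StrongWinTwo E p := by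
  rintro ⟨σ, hσ, hwin⟩
  exact not_strongWinTwo_and_strongWinTwo (playerTwoMoves_realPlay_subset σ)
    (playerTwoMoves_ghostPlay_subset hσ)
    ⟨hwin _ (realPlay_injective hσ) (realPlay_consistent σ),
      hwin _ (ghostPlay_injective hσ) (ghostPlay_consistent σ)⟩

/-- Strategy stealing: on any hypergraph, the second player has no strategy guaranteeing
a strong win in the achievement game (plays are injective sequences of vertices, Player 1
moving at even indices; a legal strategy always picks a previously unchosen vertex). -/
theorem no_second_player_strong_win_strategy (V : Type*) [Infinite V] (E : Set (Set V)) :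
    ¬ ∃ σ : List V → V, (∀ h : List V, h.Nodup → σ h ∉ h) ∧
      ∀ p : ℕ → V, Function.Injective p → ConsistentWithTwo σ p → StrongWinTwo E p :=
  no_second_player_strong_win_strategy_general V E
end
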